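/- arXiv:1602.05604 — 2 statements merged into one kernel-verified Lean document; each statement's English description precedes it below -/
import Mathlib

section
/- Assume b_EE > 0, b_IE > 0, b_EI > 0, b_II > 0 and b_IE·b_EI < b_EE·(V_F − V_R + b_II). Then lim_{N_E→∞} F(N_E) = (V_F − V_R)·(V_F − V_R + b_II) / (b_EE·(V_F − V_R) + b_EE·b_II − b_IE·b_EI). Moreover, if in addition (V_F − V_R)² < (V_F − V_R)·(b_EE − b_II) + b_EE·b_II − b_IE·b_EI, then this limit is strictly less than 1. -/
open MeasureTheory

/-- The stationary firing-rate functional `I1` of the excitatory population. -/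
noncomputable def I1 (VR VF aE bEE bIE : ℝ) (NE NI : ℝ) : ℝ :=
  ∫ s in Set.Ioi (0:ℝ),
    Real.exp (-s ^ 2 / 2) / s *
      (Real.exp (s * ((VF - (bEE * NE - bIE * NI)) / Real.sqrt aE)) -
       Real.exp (s * ((VR - (bEE * NE - bIE * NI)) / Real.sqrt aE)))

/-- The stationary firing-rate functional `I2` of the inhibitory population. -/
noncomputable def I2 (VR VF aI bEE bEI bII νext : ℝ) (NE NI : ℝ) : ℝ :=
  ∫ s in Set.Ioi (0:ℝ),
    Real.exp (-s ^ 2 / 2) / s *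
      (Real.exp (s * ((VF - (bEI * NE - bII * NI + (bEI - bEE) * νext)) / Real.sqrt aI)) -
       Real.exp (s * ((VR - (bEI * NE - bII * NI + (bEI - bEE) * νext)) / Real.sqrt aI)))

open Real Set Filter

lemma exp_diff_lower {x y : ℝ} : (x - y) * Real.exp y ≤ Real.exp x - Real.exp y := by
  have h1 := Real.add_one_le_exp (x - y)
  rw [Real.exp_sub] at h1
  have py := Real.exp_pos y
  have h2 : (x - y + 1) * Real.exp y ≤ Real.exp x := (le_div_iff₀ py).1 (by linarith)
  nlinarith

lemma exp_diff_upper {x y : ℝ} : Real.exp x - Real.exp y ≤ (x - y) * Real.exp x := by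
  have h1 := Real.add_one_le_exp (y - x)
  rw [Real.exp_sub] at h1
  have px := Real.exp_pos x
  have h2 : (y - x + 1) * Real.exp x ≤ Real.exp y := (le_div_iff₀ px).1 (by linarith)
  nlinarith

/-- pointwise two-sided bound for the integrand -/
lemma integrand_bounds {wR wF : ℝ} {s : ℝ} (hs : 0 < s) :
    (wF - wR) * (Real.exp (-s ^ 2 / 2) * Real.exp (s * wR)) ≤
      Real.exp (-s ^ 2 / 2) / s * (Real.exp (s * wF) - Real.exp (s * wR)) ∧
    Real.exp (-s ^ 2 / 2) / s * (Real.exp (s * wF) - Real.exp (s * wR)) ≤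
      (wF - wR) * (Real.exp (-s ^ 2 / 2) * Real.exp (s * wF)) := by
  have hg : 0 < Real.exp (-s ^ 2 / 2) := Real.exp_pos _
  have hlo : s * (wF - wR) * Real.exp (s * wR) ≤ Real.exp (s * wF) - Real.exp (s * wR) := by
    have := exp_diff_lower (x := s * wF) (y := s * wR)
    calc s * (wF - wR) * Real.exp (s * wR) = (s * wF - s * wR) * Real.exp (s * wR) := by ring
    _ ≤ _ := this
  have hhi : Real.exp (s * wF) - Real.exp (s * wR) ≤ s * (wF - wR) * Real.exp (s * wF) := by
    have := exp_diff_upper (x := s * wF) (y := s * wR)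
    calc Real.exp (s * wF) - Real.exp (s * wR) ≤ (s * wF - s * wR) * Real.exp (s * wF) := this
    _ = s * (wF - wR) * Real.exp (s * wF) := by ring
  have hpos : 0 < Real.exp (-s ^ 2 / 2) / s := div_pos hg hs
  constructor
  · have := mul_le_mul_of_nonneg_left hlo hpos.le
    calc (wF - wR) * (Real.exp (-s ^ 2 / 2) * Real.exp (s * wR))
        = Real.exp (-s ^ 2 / 2) / s * (s * (wF - wR) * Real.exp (s * wR)) := by
          field_simp
    _ ≤ _ := this
  · have := mul_le_mul_of_nonneg_left hhi hpos.le
    calc Real.exp (-s ^ 2 / 2) / s * (Real.exp (s * wF) - Real.exp (s * wR)) ≤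
        Real.exp (-s ^ 2 / 2) / s * (s * (wF - wR) * Real.exp (s * wF)) := this
    _ = (wF - wR) * (Real.exp (-s ^ 2 / 2) * Real.exp (s * wF)) := by field_simp

lemma integrable_gauss_lin (c : ℝ) :
    IntegrableOn (fun s : ℝ => Real.exp (-s ^ 2 / 2) * Real.exp (s * c)) (Ioi 0) := by
  have h0 : Integrable (fun x : ℝ => Real.exp (-(1/2) * x ^ 2)) :=
    integrable_exp_neg_mul_sq (by norm_num)
  have h1 := (h0.comp_sub_right c).const_mul (Real.exp (c ^ 2 / 2))
  have h2 : (fun s : ℝ => Real.exp (-s ^ 2 / 2) * Real.exp (s * c)) =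
      fun t : ℝ => Real.exp (c ^ 2 / 2) * Real.exp (-(1/2) * (t - c) ^ 2) := by
    funext t
    rw [← Real.exp_add, ← Real.exp_add]
    congr 1
    ring
  rw [h2]
  exact h1.integrableOn

lemma measurable_core (wR wF : ℝ) :
    AEStronglyMeasurable
      (fun s : ℝ => Real.exp (-s ^ 2 / 2) / s * (Real.exp (s * wF) - Real.exp (s * wR)))
      (volume.restrict (Ioi 0)) := by
  apply ContinuousOn.aestronglyMeasurable _ measurableSet_Ioi
  apply ContinuousOn.mul
  · exact ContinuousOn.div (Continuous.continuousOn (by continuity)) continuousOn_id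
      (fun x hx => ne_of_gt hx)
  · exact Continuous.continuousOn (by continuity)

lemma integrable_core {wR wF : ℝ} (h : wR ≤ wF) :
    IntegrableOn
      (fun s : ℝ => Real.exp (-s ^ 2 / 2) / s * (Real.exp (s * wF) - Real.exp (s * wR)))
      (Ioi 0) := by
  apply Integrable.mono ((integrable_gauss_lin wF).const_mul (wF - wR)) (measurable_core wR wF)
  filter_upwards [ae_restrict_mem measurableSet_Ioi] with s hs
  have hb := integrand_bounds (wR := wR) (wF := wF) hs
  have h0 : 0 ≤ (wF - wR) * (Real.exp (-s ^ 2 / 2) * Real.exp (s * wR)) :=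
    mul_nonneg (sub_nonneg.2 h) (by positivity)
  rw [Real.norm_eq_abs, Real.norm_eq_abs, abs_of_nonneg (le_trans h0 hb.1),
    abs_of_nonneg (mul_nonneg (sub_nonneg.2 h) (by positivity))]
  exact hb.2

lemma integral_exp_neg_mul_Ioi_zero {r : ℝ} (hr : 0 < r) :
    ∫ s in Ioi (0:ℝ), Real.exp (-(r * s)) = 1 / r := by
  have h := Real.integral_rpow_mul_exp_neg_mul_Ioi (zero_lt_one) hr
  rw [Real.Gamma_one, Real.rpow_one, mul_one] at h
  rw [← h]
  refine setIntegral_congr_fun measurableSet_Ioi (fun t _ => ?_)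
  rw [sub_self, Real.rpow_zero, one_mul]

lemma integral_sq_exp_neg_Ioi_zero {r : ℝ} (hr : 0 < r) :
    ∫ s in Ioi (0:ℝ), s ^ 2 * Real.exp (-(r * s)) = 2 / r ^ 3 := by
  have h := Real.integral_rpow_mul_exp_neg_mul_Ioi (by norm_num : (0:ℝ) < 3) hr
  have hg : Real.Gamma 3 = 2 := by
    rw [show (3:ℝ) = (2:ℕ) + 1 by norm_num, Real.Gamma_nat_eq_factorial]
    norm_num
  rw [hg] at h
  have h2 : ∫ s in Ioi (0:ℝ), s ^ 2 * Real.exp (-(r * s)) =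
      ∫ t in Ioi (0:ℝ), t ^ ((3:ℝ) - 1) * Real.exp (-(r * t)) := by
    refine setIntegral_congr_fun measurableSet_Ioi (fun t ht => ?_)
    rw [show (3:ℝ) - 1 = ((2:ℕ):ℝ) by norm_num, Real.rpow_natCast]
  rw [h2, h, show ((1:ℝ)/r) ^ (3:ℝ) = ((1:ℝ)/r) ^ (3:ℕ) by
    rw [show (3:ℝ) = ((3:ℕ):ℝ) by norm_num, Real.rpow_natCast]]
  field_simp

lemma integrable_sq_exp_neg {r : ℝ} (hr : 0 < r) :
    IntegrableOn (fun s : ℝ => s ^ 2 * Real.exp (-(r * s))) (Ioi 0) := by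
  apply integrable_of_isBigO_exp_neg (half_pos hr)
    (Continuous.continuousOn (by continuity))
  have h := (isLittleO_pow_exp_pos_mul_atTop 2 (half_pos hr)).isBigO
  have h2 := h.mul (Asymptotics.isBigO_refl (fun x : ℝ => Real.exp (-(r * x))) atTop)
  refine h2.congr' (EventuallyEq.rfl) ?_
  filter_upwards with x
  rw [← Real.exp_add]
  congr 1
  ring

lemma integrable_exp_lin {wF : ℝ} (hwF : wF < 0) :
    IntegrableOn (fun s : ℝ => Real.exp (s * wF)) (Ioi 0) := by
  have h := exp_neg_integrableOn_Ioi 0 (neg_pos.2 hwF)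
  have he : (fun x : ℝ => Real.exp (-(-wF) * x)) = fun x : ℝ => Real.exp (x * wF) := by
    funext x; ring_nf
  rwa [he] at h

lemma integral_exp_lin {wF : ℝ} (hwF : wF < 0) :
    ∫ s in Ioi (0:ℝ), Real.exp (s * wF) = 1 / (-wF) := by
  have h := integral_exp_neg_mul_Ioi_zero (neg_pos.2 hwF)
  rw [← h]
  refine setIntegral_congr_fun measurableSet_Ioi (fun t _ => ?_)
  ring_nf

lemma core_upper {wR wF : ℝ} (h : wR ≤ wF) (hwF : wF < 0) :
    ∫ s in Ioi (0:ℝ), Real.exp (-s ^ 2 / 2) / s * (Real.exp (s * wF) - Real.exp (s * wR)) ≤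
      (wF - wR) * (1 / (-wF)) := by
  have step1 : ∫ s in Ioi (0:ℝ),
      Real.exp (-s ^ 2 / 2) / s * (Real.exp (s * wF) - Real.exp (s * wR)) ≤
      ∫ s in Ioi (0:ℝ), (wF - wR) * (Real.exp (-s ^ 2 / 2) * Real.exp (s * wF)) := by
    refine setIntegral_mono_on (integrable_core h) ((integrable_gauss_lin wF).const_mul _)
      measurableSet_Ioi (fun s hs => (integrand_bounds hs).2)
  have step2 : ∫ s in Ioi (0:ℝ), Real.exp (-s ^ 2 / 2) * Real.exp (s * wF) ≤
      ∫ s in Ioi (0:ℝ), Real.exp (s * wF) := by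
    refine setIntegral_mono_on (integrable_gauss_lin wF) (integrable_exp_lin hwF)
      measurableSet_Ioi (fun s _ => ?_)
    have h1 : Real.exp (-s ^ 2 / 2) ≤ 1 := Real.exp_le_one_iff.2 (by nlinarith [sq_nonneg s])
    nlinarith [Real.exp_pos (s * wF)]
  calc _ ≤ ∫ s in Ioi (0:ℝ), (wF - wR) * (Real.exp (-s ^ 2 / 2) * Real.exp (s * wF)) := step1
  _ = (wF - wR) * ∫ s in Ioi (0:ℝ), Real.exp (-s ^ 2 / 2) * Real.exp (s * wF) :=
      integral_const_mul _ _
  _ ≤ (wF - wR) * ∫ s in Ioi (0:ℝ), Real.exp (s * wF) :=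
      mul_le_mul_of_nonneg_left step2 (sub_nonneg.2 h)
  _ = (wF - wR) * (1 / (-wF)) := by rw [integral_exp_lin hwF]

lemma core_lower {wR wF : ℝ} (h : wR ≤ wF) (hwR : wR < 0) :
    (wF - wR) * (1 / (-wR) - 1 / (-wR) ^ 3) ≤
      ∫ s in Ioi (0:ℝ), Real.exp (-s ^ 2 / 2) / s * (Real.exp (s * wF) - Real.exp (s * wR)) := by
  set lam := -wR with hlam
  have hl : 0 < lam := neg_pos.2 hwR
  have hint1 := exp_neg_integrableOn_Ioi 0 hl
  have hint2 := integrable_sq_exp_neg hl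
  have hminor : IntegrableOn
      (fun s : ℝ => Real.exp (-(lam * s)) - s ^ 2 * Real.exp (-(lam * s)) / 2) (Ioi 0) := by
    have h1 : (fun x : ℝ => Real.exp (-lam * x)) = fun x : ℝ => Real.exp (-(lam * x)) := by
      funext x; ring_nf
    rw [h1] at hint1
    exact hint1.sub (hint2.div_const 2)
  have step2 : ∫ s in Ioi (0:ℝ), (Real.exp (-(lam * s)) - s ^ 2 * Real.exp (-(lam * s)) / 2) ≤
      ∫ s in Ioi (0:ℝ), Real.exp (-s ^ 2 / 2) * Real.exp (s * wR) := by
    refine setIntegral_mono_on hminor (integrable_gauss_lin wR) measurableSet_Ioi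
      (fun s _ => ?_)
    have he : Real.exp (s * wR) = Real.exp (-(lam * s)) := by rw [hlam]; ring_nf
    have h1 : 1 - s ^ 2 / 2 ≤ Real.exp (-s ^ 2 / 2) := by
      have := Real.add_one_le_exp (-s ^ 2 / 2)
      linarith
    rw [he]
    nlinarith [Real.exp_pos (-(lam * s))]
  have hval : ∫ s in Ioi (0:ℝ),
      (Real.exp (-(lam * s)) - s ^ 2 * Real.exp (-(lam * s)) / 2) = 1 / lam - 1 / lam ^ 3 := by
    have h1 : (fun x : ℝ => Real.exp (-lam * x)) = fun x : ℝ => Real.exp (-(lam * x)) := by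
      funext x; ring_nf
    rw [h1] at hint1
    have hsub := integral_sub hint1 (hint2.div_const 2)
    rw [hsub]
    have h2 : ∫ s in Ioi (0:ℝ), s ^ 2 * Real.exp (-(lam * s)) / 2 =
        (∫ s in Ioi (0:ℝ), s ^ 2 * Real.exp (-(lam * s))) / 2 := integral_div _ _
    rw [h2, integral_exp_neg_mul_Ioi_zero hl, integral_sq_exp_neg_Ioi_zero hl]
    field_simp
  have step1 : ∫ s in Ioi (0:ℝ), (wF - wR) * (Real.exp (-s ^ 2 / 2) * Real.exp (s * wR)) ≤
      ∫ s in Ioi (0:ℝ), Real.exp (-s ^ 2 / 2) / s * (Real.exp (s * wF) - Real.exp (s * wR)) := by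
    refine setIntegral_mono_on ((integrable_gauss_lin wR).const_mul _) (integrable_core h)
      measurableSet_Ioi (fun s hs => (integrand_bounds hs).1)
  calc (wF - wR) * (1 / (-wR) - 1 / (-wR) ^ 3)
      = (wF - wR) * ∫ s in Ioi (0:ℝ),
        (Real.exp (-(lam * s)) - s ^ 2 * Real.exp (-(lam * s)) / 2) := by rw [hval]
  _ ≤ (wF - wR) * ∫ s in Ioi (0:ℝ), Real.exp (-s ^ 2 / 2) * Real.exp (s * wR) :=
      mul_le_mul_of_nonneg_left step2 (sub_nonneg.2 h)
  _ = ∫ s in Ioi (0:ℝ), (wF - wR) * (Real.exp (-s ^ 2 / 2) * Real.exp (s * wR)) :=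
      (integral_const_mul _ _).symm
  _ ≤ _ := step1

noncomputable def Jfun (VR VF a V0 : ℝ) : ℝ :=
  ∫ s in Set.Ioi (0:ℝ),
    Real.exp (-s ^ 2 / 2) / s *
      (Real.exp (s * ((VF - V0) / Real.sqrt a)) - Real.exp (s * ((VR - V0) / Real.sqrt a)))

section Jfun
variable {VR VF a : ℝ}

lemma Jfun_integrable (hV : VR < VF) (ha : 0 < a) (V0 : ℝ) :
    IntegrableOn (fun s : ℝ =>
      Real.exp (-s ^ 2 / 2) / s *
        (Real.exp (s * ((VF - V0) / Real.sqrt a)) - Real.exp (s * ((VR - V0) / Real.sqrt a))))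
      (Ioi 0) := by
  have hsa : (0:ℝ) < Real.sqrt a := Real.sqrt_pos.2 ha
  exact integrable_core ((div_le_div_iff_of_pos_right hsa).2 (by linarith))

lemma Jfun_le (hV : VR < VF) (ha : 0 < a) {V0 : ℝ} (hV0 : VF < V0) :
    Jfun VR VF a V0 ≤ (VF - VR) / (V0 - VF) := by
  have hsa : (0:ℝ) < Real.sqrt a := Real.sqrt_pos.2 ha
  have hw : (VR - V0) / Real.sqrt a ≤ (VF - V0) / Real.sqrt a :=
    (div_le_div_iff_of_pos_right hsa).2 (by linarith)
  have hwF : (VF - V0) / Real.sqrt a < 0 := div_neg_of_neg_of_pos (by linarith) hsa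
  have h := core_upper hw hwF
  have heq : ((VF - V0) / Real.sqrt a - (VR - V0) / Real.sqrt a) *
      (1 / (-((VF - V0) / Real.sqrt a))) = (VF - VR) / (V0 - VF) := by
    have h1 : V0 - VF ≠ 0 := by linarith
    field_simp
    have h2 : VF - V0 ≠ 0 := by linarith
    rw [neg_div', div_eq_iff h2]
    ring
  rw [heq] at h
  exact h

lemma Jfun_ge (hV : VR < VF) (ha : 0 < a) {V0 : ℝ} (hV0 : VR < V0) :
    (VF - VR) / (V0 - VR) - a * (VF - VR) / (V0 - VR) ^ 3 ≤ Jfun VR VF a V0 := by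
  have hsa : (0:ℝ) < Real.sqrt a := Real.sqrt_pos.2 ha
  have hw : (VR - V0) / Real.sqrt a ≤ (VF - V0) / Real.sqrt a :=
    (div_le_div_iff_of_pos_right hsa).2 (by linarith)
  have hwR : (VR - V0) / Real.sqrt a < 0 := div_neg_of_neg_of_pos (by linarith) hsa
  have h := core_lower hw hwR
  have hsa2 : Real.sqrt a ^ 2 = a := Real.sq_sqrt ha.le
  have h1 : V0 - VR ≠ 0 := by linarith
  have key : ∀ t : ℝ, t ≠ 0 → t ^ 2 = a →
      ((VF - V0) / t - (VR - V0) / t) *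
        (1 / (-((VR - V0) / t)) - 1 / (-((VR - V0) / t)) ^ 3) =
      (VF - VR) / (V0 - VR) - a * (VF - VR) / (V0 - VR) ^ 3 := by
    intro t ht ht2
    subst ht2
    have h1' : VR - V0 ≠ 0 := fun h => h1 (by linarith)
    field_simp
    ring
  have heq := key (Real.sqrt a) (ne_of_gt hsa) hsa2
  rw [heq] at h
  exact h

lemma Jfun_pos (hV : VR < VF) (ha : 0 < a) (V0 : ℝ) : 0 < Jfun VR VF a V0 := by
  have hsa : (0:ℝ) < Real.sqrt a := Real.sqrt_pos.2 ha
  set f := fun s : ℝ =>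
    Real.exp (-s ^ 2 / 2) / s *
      (Real.exp (s * ((VF - V0) / Real.sqrt a)) - Real.exp (s * ((VR - V0) / Real.sqrt a)))
    with hf
  have hpos : ∀ s ∈ Ioi (0:ℝ), 0 < f s := by
    intro s hs
    have hs0 : (0:ℝ) < s := hs
    have hw : (VR - V0) / Real.sqrt a < (VF - V0) / Real.sqrt a :=
      (div_lt_div_iff_of_pos_right hsa).2 (by linarith)
    have : Real.exp (s * ((VR - V0) / Real.sqrt a)) < Real.exp (s * ((VF - V0) / Real.sqrt a)) :=
      Real.exp_lt_exp.2 (by exact mul_lt_mul_of_pos_left hw hs0)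
    have h2 : 0 < Real.exp (-s ^ 2 / 2) / s := div_pos (Real.exp_pos _) hs0
    exact mul_pos h2 (by linarith)
  rw [show Jfun VR VF a V0 = ∫ s in Ioi (0:ℝ), f s from rfl]
  rw [setIntegral_pos_iff_support_of_nonneg_ae ?h1 (Jfun_integrable hV ha V0)]
  case h1 =>
    filter_upwards [ae_restrict_mem measurableSet_Ioi] with s hs
    exact (hpos s hs).le
  have hsub : Ioi (0:ℝ) ⊆ Function.support f ∩ Ioi 0 :=
    fun x hx => ⟨ne_of_gt (hpos x hx), hx⟩
  have h0 : (0:ENNReal) < volume (Ioi (0:ℝ)) := by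
    rw [Real.volume_Ioi]; exact ENNReal.zero_lt_top
  exact lt_of_lt_of_le h0 (measure_mono hsub)

lemma Jfun_anti (hV : VR < VF) (ha : 0 < a) {V0 M : ℝ} (hVM : V0 ≤ M) :
    Jfun VR VF a M ≤ Jfun VR VF a V0 := by
  have hsa : (0:ℝ) < Real.sqrt a := Real.sqrt_pos.2 ha
  refine setIntegral_mono_on (Jfun_integrable hV ha M) (Jfun_integrable hV ha V0)
    measurableSet_Ioi (fun s hs => ?_)
  have hs0 : (0:ℝ) < s := hs
  have key : ∀ V C : ℝ, Real.exp (s * ((V - C) / Real.sqrt a)) =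
      Real.exp (s * V / Real.sqrt a) * Real.exp (-(s * C / Real.sqrt a)) := by
    intro V C
    rw [← Real.exp_add]
    congr 1
    field_simp
    ring
  rw [key VF M, key VR M, key VF V0, key VR V0]
  have h1 : Real.exp (-(s * M / Real.sqrt a)) ≤ Real.exp (-(s * V0 / Real.sqrt a)) := by
    apply Real.exp_le_exp.2
    have : s * V0 / Real.sqrt a ≤ s * M / Real.sqrt a :=
      (div_le_div_iff_of_pos_right hsa).2 (mul_le_mul_of_nonneg_left hVM hs0.le)
    linarith
  have h2 : Real.exp (s * VR / Real.sqrt a) ≤ Real.exp (s * VF / Real.sqrt a) := by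
    apply Real.exp_le_exp.2
    exact (div_le_div_iff_of_pos_right hsa).2 (mul_le_mul_of_nonneg_left hV.le hs0.le)
  have h3 : 0 ≤ Real.exp (-s ^ 2 / 2) / s := (div_pos (Real.exp_pos _) hs0).le
  apply mul_le_mul_of_nonneg_left _ h3
  calc Real.exp (s * VF / Real.sqrt a) * Real.exp (-(s * M / Real.sqrt a)) -
        Real.exp (s * VR / Real.sqrt a) * Real.exp (-(s * M / Real.sqrt a))
      = (Real.exp (s * VF / Real.sqrt a) - Real.exp (s * VR / Real.sqrt a)) *
        Real.exp (-(s * M / Real.sqrt a)) := by ring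
  _ ≤ (Real.exp (s * VF / Real.sqrt a) - Real.exp (s * VR / Real.sqrt a)) *
        Real.exp (-(s * V0 / Real.sqrt a)) :=
      mul_le_mul_of_nonneg_left h1 (by linarith)
  _ = _ := by ring

end Jfun

lemma tendsto_x_div_sub (c : ℝ) :
    Tendsto (fun x : ℝ => x / (x - c)) atTop (nhds 1) := by
  have h1 : Tendsto (fun x : ℝ => c / (x - c)) atTop (nhds 0) :=
    Tendsto.div_atTop tendsto_const_nhds (tendsto_atTop_add_const_right _ (-c) tendsto_id)
  have h2 : Tendsto (fun x : ℝ => 1 + c / (x - c)) atTop (nhds 1) := by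
    simpa using tendsto_const_nhds.add h1
  refine h2.congr' ?_
  filter_upwards [eventually_gt_atTop c] with x hx
  have : x - c ≠ 0 := by linarith
  field_simp
  ring

lemma tendsto_inv_sub (c : ℝ) :
    Tendsto (fun x : ℝ => (x - c)⁻¹) atTop (nhds 0) :=
  tendsto_inv_atTop_zero.comp (tendsto_atTop_add_const_right _ (-c) tendsto_id)

lemma tendsto_x_div_sub_cube (c : ℝ) :
    Tendsto (fun x : ℝ => x / (x - c) ^ 3) atTop (nhds 0) := by
  have h := ((tendsto_x_div_sub c).mul ((tendsto_inv_sub c).mul (tendsto_inv_sub c)))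
  have h2 : Tendsto (fun x : ℝ => x / (x - c) * ((x - c)⁻¹ * (x - c)⁻¹)) atTop (nhds 0) := by
    simpa using h
  refine h2.congr' ?_
  filter_upwards [eventually_gt_atTop c] with x hx
  have h3 : x - c ≠ 0 := by linarith
  simp only [div_eq_mul_inv]
  rw [show ((x - c) ^ 3)⁻¹ = (x - c)⁻¹ * ((x - c)⁻¹ * (x - c)⁻¹) by
    rw [show (x - c) ^ 3 = (x - c) * ((x - c) * (x - c)) by ring]; simp [mul_inv]; ring]
  ring

lemma tendsto_V0_mul_Jfun {VR VF a : ℝ} (hV : VR < VF) (ha : 0 < a) :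
    Tendsto (fun V0 => V0 * Jfun VR VF a V0) atTop (nhds (VF - VR)) := by
  have hlow : Tendsto (fun V0 : ℝ =>
      V0 * ((VF - VR) / (V0 - VR) - a * (VF - VR) / (V0 - VR) ^ 3)) atTop (nhds (VF - VR)) := by
    have h : Tendsto (fun V0 : ℝ =>
        (VF - VR) * (V0 / (V0 - VR)) - a * (VF - VR) * (V0 / (V0 - VR) ^ 3)) atTop
        (nhds ((VF - VR) * 1 - a * (VF - VR) * 0)) :=
      ((tendsto_x_div_sub VR).const_mul _).sub ((tendsto_x_div_sub_cube VR).const_mul _)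
    have h2 : (VF - VR) * 1 - a * (VF - VR) * 0 = VF - VR := by ring
    rw [h2] at h
    refine h.congr (fun V0 => by ring)
  have hup : Tendsto (fun V0 : ℝ => V0 * ((VF - VR) / (V0 - VF))) atTop (nhds (VF - VR)) := by
    have h : Tendsto (fun V0 : ℝ => (VF - VR) * (V0 / (V0 - VF))) atTop
        (nhds ((VF - VR) * 1)) := (tendsto_x_div_sub VF).const_mul _
    rw [mul_one] at h
    refine h.congr (fun V0 => by ring)
  refine tendsto_of_tendsto_of_tendsto_of_le_of_le' hlow hup ?_ ?_
  · filter_upwards [eventually_gt_atTop (max VR VF), eventually_gt_atTop 0] with V0 h1 h2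
    have hVR : VR < V0 := lt_of_le_of_lt (le_max_left _ _) h1
    exact mul_le_mul_of_nonneg_left (Jfun_ge hV ha hVR) h2.le
  · filter_upwards [eventually_gt_atTop (max VR VF), eventually_gt_atTop 0] with V0 h1 h2
    have hVF : VF < V0 := lt_of_le_of_lt (le_max_right _ _) h1
    exact mul_le_mul_of_nonneg_left (Jfun_le hV ha hVF) h2.le

lemma tendsto_Jfun_zero {VR VF a : ℝ} (hV : VR < VF) (ha : 0 < a) :
    Tendsto (fun V0 => Jfun VR VF a V0) atTop (nhds 0) := by
  have hinv : Tendsto (fun V0 : ℝ => V0⁻¹) atTop (nhds 0) := tendsto_inv_atTop_zero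
  have h := (tendsto_V0_mul_Jfun hV ha).mul hinv
  rw [mul_zero] at h
  refine h.congr' ?_
  filter_upwards [eventually_gt_atTop 0] with V0 h1
  have h2 : V0 ≠ 0 := ne_of_gt h1
  field_simp

/-- If `b_IE·b_EI < b_EE·(V_F − V_R + b_II)`, then
`F(N_E) = N_E·I1(N_E, N_I(N_E))` has the stated finite limit at `∞`; moreover, under the
additional condition `(V_F − V_R)² < (V_F − V_R)·(b_EE − b_II) + b_EE·b_II − b_IE·b_EI`
this limit is strictly less than `1`. -/
theorem F_tendsto_finite_limit (VR VF aE aI bEE bIE bEI bII νext : ℝ)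
    (hV : VR < VF) (haE : 0 < aE) (haI : 0 < aI)
    (hEE : 0 < bEE) (hIE : 0 < bIE) (hEI : 0 < bEI) (hII : 0 < bII) (hν : 0 ≤ νext)
    (hcond : bIE * bEI < bEE * (VF - VR + bII))
    (NIfun : ℝ → ℝ)
    (hNI : ∀ NE : ℝ, 0 ≤ NE →
      0 < NIfun NE ∧ NIfun NE * I2 VR VF aI bEE bEI bII νext NE (NIfun NE) = 1) :
    Filter.Tendsto (fun NE => NE * I1 VR VF aE bEE bIE NE (NIfun NE))
      Filter.atTop
      (nhds ((VF - VR) * (VF - VR + bII) /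
        (bEE * (VF - VR) + bEE * bII - bIE * bEI))) ∧
    ((VF - VR) ^ 2 < (VF - VR) * (bEE - bII) + bEE * bII - bIE * bEI →
      (VF - VR) * (VF - VR + bII) /
        (bEE * (VF - VR) + bEE * bII - bIE * bEI) < 1) := by
  have hVFR : 0 < VF - VR + bII := by linarith
  have hD : 0 < bEE * (VF - VR) + bEE * bII - bIE * bEI := by nlinarith
  constructor
  · -- main limit
    set c : ℝ := (bEI - bEE) * νext with hc
    set V0I : ℝ → ℝ := fun NE => bEI * NE - bII * NIfun NE + c with hV0I
    have hI2J : ∀ NE : ℝ, I2 VR VF aI bEE bEI bII νext NE (NIfun NE) =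
        Jfun VR VF aI (V0I NE) := fun NE => rfl
    have hI1J : ∀ NE : ℝ, I1 VR VF aE bEE bIE NE (NIfun NE) =
        Jfun VR VF aE (bEE * NE - bIE * NIfun NE) := fun NE => rfl
    -- Step 1: V0I → ∞
    have hV0Itop : Tendsto V0I atTop atTop := by
      rw [tendsto_atTop]
      intro M
      have hδ : 0 < Jfun VR VF aI M := Jfun_pos hV haI M
      filter_upwards [eventually_ge_atTop
        (max 0 ((M - c + bII / Jfun VR VF aI M) / bEI))] with NE hNE
      have hNE0 : (0:ℝ) ≤ NE := le_trans (le_max_left _ _) hNE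
      obtain ⟨hpos, heq⟩ := hNI NE hNE0
      rw [hI2J] at heq
      by_contra hlt
      push_neg at hlt
      have hmono : Jfun VR VF aI M ≤ Jfun VR VF aI (V0I NE) := Jfun_anti hV haI hlt.le
      have hJpos : 0 < Jfun VR VF aI (V0I NE) := Jfun_pos hV haI _
      have hNIval : NIfun NE = 1 / Jfun VR VF aI (V0I NE) :=
        (eq_div_iff (ne_of_gt hJpos)).2 heq
      have hNIle : NIfun NE ≤ 1 / Jfun VR VF aI M := by
        rw [hNIval]
        exact one_div_le_one_div_of_le hδ hmono
      have h1 : (M - c + bII / Jfun VR VF aI M) / bEI ≤ NE := le_trans (le_max_right _ _) hNE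
      have h2 : M - c + bII / Jfun VR VF aI M ≤ bEI * NE := by
        rw [div_le_iff₀ hEI] at h1
        linarith
      have h3 : bII * NIfun NE ≤ bII * (1 / Jfun VR VF aI M) :=
        mul_le_mul_of_nonneg_left hNIle hII.le
      have h4 : V0I NE = bEI * NE - bII * NIfun NE + c := rfl
      have h5 : bII / Jfun VR VF aI M = bII * (1 / Jfun VR VF aI M) := by ring
      linarith
    -- Step 2: limits along V0I
    have hJV0I : Tendsto (fun NE => V0I NE * Jfun VR VF aI (V0I NE)) atTop
        (nhds (VF - VR)) := (tendsto_V0_mul_Jfun hV haI).comp hV0Itop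
    have hJ0 : Tendsto (fun NE => Jfun VR VF aI (V0I NE)) atTop (nhds 0) :=
      (tendsto_Jfun_zero hV haI).comp hV0Itop
    -- Step 3: NE * I2 → (VF - VR + bII)/bEI
    have hNEI2 : Tendsto (fun NE => NE * Jfun VR VF aI (V0I NE)) atTop
        (nhds ((VF - VR + bII) / bEI)) := by
      have h := ((hJV0I.sub (hJ0.const_mul c)).add_const bII).div_const bEI
      have hval : ((VF - VR) - c * 0 + bII) / bEI = (VF - VR + bII) / bEI := by ring
      rw [hval] at h
      refine h.congr' ?_
      filter_upwards [eventually_ge_atTop 0] with NE hNE0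
      obtain ⟨hpos, heq⟩ := hNI NE hNE0
      rw [hI2J] at heq
      rw [div_eq_iff (ne_of_gt hEI)]
      have h4 : V0I NE = bEI * NE - bII * NIfun NE + c := rfl
      rw [h4]
      linear_combination (-bII) * heq
    -- Step 4: NIfun NE / NE → bEI / (VF - VR + bII)
    have hbeta : (0:ℝ) < (VF - VR + bII) / bEI := div_pos hVFR hEI
    have hratio : Tendsto (fun NE => NIfun NE / NE) atTop
        (nhds (bEI / (VF - VR + bII))) := by
      have h := hNEI2.inv₀ (ne_of_gt hbeta)
      rw [inv_div] at h
      refine h.congr' ?_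
      filter_upwards [eventually_gt_atTop 0] with NE hNE0
      obtain ⟨hpos, heq⟩ := hNI NE (le_of_lt hNE0)
      rw [hI2J] at heq
      have hJpos : 0 < Jfun VR VF aI (V0I NE) := Jfun_pos hV haI _
      have h6 : NIfun NE = (Jfun VR VF aI (V0I NE))⁻¹ := by
        rw [inv_eq_one_div]
        exact (eq_div_iff (ne_of_gt hJpos)).2 heq
      rw [h6, mul_inv, div_eq_mul_inv]
      ring
    -- Step 5: q → γ > 0
    have hγ : (0:ℝ) < bEE - bIE * (bEI / (VF - VR + bII)) := by
      rw [sub_pos, mul_div_assoc' bIE bEI _, div_lt_iff₀ hVFR]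
      linarith
    have hq : Tendsto (fun NE => bEE - bIE * (NIfun NE / NE)) atTop
        (nhds (bEE - bIE * (bEI / (VF - VR + bII)))) :=
      tendsto_const_nhds.sub (hratio.const_mul bIE)
    -- Step 6: V0E → ∞
    have hV0E : Tendsto (fun NE => bEE * NE - bIE * NIfun NE) atTop atTop := by
      have h : Tendsto (fun NE : ℝ => NE * (bEE - bIE * (NIfun NE / NE))) atTop atTop :=
        Tendsto.atTop_mul_pos hγ tendsto_id hq
      refine h.congr' ?_
      filter_upwards [eventually_gt_atTop 0] with NE hNE0
      field_simp
    -- Step 7: conclude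
    have hmain : Tendsto (fun NE =>
        (bEE * NE - bIE * NIfun NE) * Jfun VR VF aE (bEE * NE - bIE * NIfun NE) *
          (bEE - bIE * (NIfun NE / NE))⁻¹) atTop
        (nhds ((VF - VR) * (bEE - bIE * (bEI / (VF - VR + bII)))⁻¹)) :=
      ((tendsto_V0_mul_Jfun hV haE).comp hV0E).mul (hq.inv₀ (ne_of_gt hγ))
    have hval : (VF - VR) * (bEE - bIE * (bEI / (VF - VR + bII)))⁻¹ =
        (VF - VR) * (VF - VR + bII) / (bEE * (VF - VR) + bEE * bII - bIE * bEI) := by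
      rw [show bEE - bIE * (bEI / (VF - VR + bII)) =
        (bEE * (VF - VR) + bEE * bII - bIE * bEI) / (VF - VR + bII) by
          rw [eq_div_iff (ne_of_gt hVFR)]; field_simp]
      rw [inv_div, mul_div_assoc']
    rw [hval] at hmain
    have hqev : ∀ᶠ NE : ℝ in atTop,
        0 < bEE - bIE * (NIfun NE / NE) :=
      hq.eventually (eventually_gt_nhds hγ)
    refine hmain.congr' ?_
    filter_upwards [hqev, eventually_gt_atTop 0] with NE hqNE hNE0
    rw [hI1J]
    have hqne : bEE - bIE * (NIfun NE / NE) ≠ 0 := ne_of_gt hqNE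
    have hNEne : NE ≠ 0 := ne_of_gt hNE0
    have h5 : NE * (NIfun NE / NE) = NIfun NE := by field_simp
    have hexp : NE * (bEE - bIE * (NIfun NE / NE)) = bEE * NE - bIE * NIfun NE := by
      rw [mul_sub, show NE * (bIE * (NIfun NE / NE)) = bIE * (NE * (NIfun NE / NE)) by ring,
        h5]
      ring
    rw [← hexp]
    calc NE * (bEE - bIE * (NIfun NE / NE)) *
          Jfun VR VF aE (NE * (bEE - bIE * (NIfun NE / NE))) *
          (bEE - bIE * (NIfun NE / NE))⁻¹
        = NE * Jfun VR VF aE (NE * (bEE - bIE * (NIfun NE / NE))) *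
          ((bEE - bIE * (NIfun NE / NE)) * (bEE - bIE * (NIfun NE / NE))⁻¹) := by ring
    _ = NE * Jfun VR VF aE (NE * (bEE - bIE * (NIfun NE / NE))) := by
        rw [mul_inv_cancel₀ hqne, mul_one]
  · -- strict bound
    intro h
    rw [div_lt_one hD]
    nlinarith
end

section
/- Assume b_IE > 0, b_EI > 0, b_II > 0 and b_IE·b_EI > b_EE·(V_F − V_R + b_II). Then lim_{N_E→∞} F(N_E) = ∞. -/
open MeasureTheory

/- ### Auxiliary lemmas -/

noncomputable def Gint (w : ℝ) : ℝ := ∫ s in Set.Ioi (0:ℝ), Real.exp (-s ^ 2 / 2 + s * w)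

lemma gauss_integrable (w : ℝ) :
    IntegrableOn (fun s : ℝ => Real.exp (-s ^ 2 / 2 + s * w)) (Set.Ioi 0) := by
  have h : (fun s : ℝ => Real.exp (-s ^ 2 / 2 + s * w))
      = fun s : ℝ => Real.exp (w ^ 2 / 2) * Real.exp (-(1/2) * (s - w) ^ 2) := by
    funext s; rw [← Real.exp_add]; congr 1; ring
  rw [h]
  exact (((integrable_exp_neg_mul_sq (by norm_num : (0:ℝ) < 1/2)).comp_sub_right
    w).const_mul _).integrableOn

lemma Gint_le {w : ℝ} (hw : w < 0) : Gint w ≤ 1 / (-w) := by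
  have hb : 0 < -w := neg_pos.mpr hw
  have hexp : IntegrableOn (fun s : ℝ => Real.exp (s * w)) (Set.Ioi 0) := by
    have := exp_neg_integrableOn_Ioi (0:ℝ) hb
    simpa [mul_comm] using this
  have h1 : Gint w ≤ ∫ s in Set.Ioi (0:ℝ), Real.exp (s * w) := by
    apply setIntegral_mono_on (gauss_integrable w) hexp measurableSet_Ioi
    intro s hs
    apply Real.exp_le_exp.2
    nlinarith [sq_nonneg s, (Set.mem_Ioi.mp hs)]
  have h2 := integral_comp_mul_left_Ioi (fun x : ℝ => Real.exp (-x)) 0 hb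
  simp only [mul_zero, integral_exp_neg_Ioi_zero, smul_eq_mul, mul_one, neg_mul, neg_neg] at h2
  rw [show (∫ s in Set.Ioi (0:ℝ), Real.exp (s * w)) = ∫ s in Set.Ioi (0:ℝ), Real.exp (w * s) by
    simp [mul_comm]] at h1
  rw [h2] at h1
  linarith [h1, (one_div (-w)) ▸ h1]

lemma Gint_ge {w : ℝ} (hw : 0 ≤ w) : Real.exp (-2⁻¹) ≤ Gint w := by
  have hsub : Set.Ioc (0:ℝ) 1 ⊆ Set.Ioi 0 := Set.Ioc_subset_Ioi_self
  have h2 : Real.exp (-2⁻¹) ≤ ∫ s in Set.Ioc (0:ℝ) 1, Real.exp (-s ^ 2 / 2 + s * w) := by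
    have hconst : (∫ _ in Set.Ioc (0:ℝ) 1, Real.exp (-2⁻¹)) = Real.exp (-2⁻¹) := by
      simp [Real.volume_Ioc]
    rw [← hconst]
    apply setIntegral_mono_on ((integrableOn_const_iff).mpr (Or.inr measure_Ioc_lt_top))
      ((gauss_integrable w).mono_set hsub) measurableSet_Ioc
    intro s hs
    apply Real.exp_le_exp.2
    obtain ⟨h0, h1'⟩ := hs
    nlinarith [mul_nonneg h0.le hw]
  refine le_trans h2 ?_
  apply setIntegral_mono_set (gauss_integrable w) ?_ (HasSubset.Subset.eventuallyLE hsub)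
  filter_upwards with s using (Real.exp_pos _).le

lemma J_lower {wR wF : ℝ} (h : wR ≤ wF) {s : ℝ} (hs : 0 < s) :
    (wF - wR) * Real.exp (-s ^ 2 / 2 + s * wR) ≤
      Real.exp (-s ^ 2 / 2) / s * (Real.exp (s * wF) - Real.exp (s * wR)) := by
  have e1 : Real.exp (s * wF) = Real.exp (s * wR) * Real.exp (s * (wF - wR)) := by
    rw [← Real.exp_add]; congr 1; ring
  have e2 : Real.exp (-s ^ 2 / 2 + s * wR) = Real.exp (-s ^ 2 / 2) * Real.exp (s * wR) := by
    rw [← Real.exp_add]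
  have key := Real.add_one_le_exp (s * (wF - wR))
  rw [div_mul_eq_mul_div, le_div_iff₀ hs, e2, e1]
  have hE := (Real.exp_pos (-s ^ 2 / 2)).le
  have hR := (Real.exp_pos (s * wR)).le
  nlinarith [mul_nonneg hE hR]

lemma J_upper {wR wF : ℝ} (h : wR ≤ wF) {s : ℝ} (hs : 0 < s) :
    Real.exp (-s ^ 2 / 2) / s * (Real.exp (s * wF) - Real.exp (s * wR)) ≤
      (wF - wR) * Real.exp (-s ^ 2 / 2 + s * wF) := by
  have e1 : Real.exp (s * wR) = Real.exp (s * wF) * Real.exp (-(s * (wF - wR))) := by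
    rw [← Real.exp_add]; congr 1; ring
  have e2 : Real.exp (-s ^ 2 / 2 + s * wF) = Real.exp (-s ^ 2 / 2) * Real.exp (s * wF) := by
    rw [← Real.exp_add]
  have key := Real.add_one_le_exp (-(s * (wF - wR)))
  rw [div_mul_eq_mul_div, div_le_iff₀ hs, e2, e1]
  have hE := (Real.exp_pos (-s ^ 2 / 2)).le
  have hF := (Real.exp_pos (s * wF)).le
  nlinarith [mul_nonneg hE hF]

lemma J_nonneg_pt {wR wF : ℝ} (h : wR ≤ wF) {s : ℝ} (hs : 0 < s) :
    0 ≤ Real.exp (-s ^ 2 / 2) / s * (Real.exp (s * wF) - Real.exp (s * wR)) :=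
  mul_nonneg (div_nonneg (Real.exp_pos _).le hs.le)
    (sub_nonneg.2 (Real.exp_le_exp.2 (by nlinarith)))

lemma J_integrableOn {wR wF : ℝ} (h : wR ≤ wF) :
    IntegrableOn
      (fun s : ℝ => Real.exp (-s ^ 2 / 2) / s * (Real.exp (s * wF) - Real.exp (s * wR)))
      (Set.Ioi 0) := by
  apply Integrable.mono' ((gauss_integrable wF).const_mul (wF - wR))
  · apply Measurable.aestronglyMeasurable
    measurability
  · filter_upwards [self_mem_ae_restrict measurableSet_Ioi] with s hs
    have hs' : (0:ℝ) < s := hs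
    rw [Real.norm_eq_abs, abs_of_nonneg (J_nonneg_pt h hs')]
    exact J_upper h hs'

lemma J_ge {wR wF : ℝ} (h : wR ≤ wF) :
    (wF - wR) * Gint wR ≤
      ∫ s in Set.Ioi (0:ℝ),
        Real.exp (-s ^ 2 / 2) / s * (Real.exp (s * wF) - Real.exp (s * wR)) := by
  calc (wF - wR) * Gint wR
      = ∫ s in Set.Ioi (0:ℝ), (wF - wR) * Real.exp (-s ^ 2 / 2 + s * wR) :=
        (integral_const_mul _ _).symm
    _ ≤ _ := setIntegral_mono_on ((gauss_integrable wR).const_mul _) (J_integrableOn h)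
        measurableSet_Ioi (fun s hs => J_lower h hs)

lemma J_le {wR wF : ℝ} (h : wR ≤ wF) :
    (∫ s in Set.Ioi (0:ℝ),
        Real.exp (-s ^ 2 / 2) / s * (Real.exp (s * wF) - Real.exp (s * wR))) ≤
      (wF - wR) * Gint wF := by
  calc (∫ s in Set.Ioi (0:ℝ),
        Real.exp (-s ^ 2 / 2) / s * (Real.exp (s * wF) - Real.exp (s * wR)))
      ≤ ∫ s in Set.Ioi (0:ℝ), (wF - wR) * Real.exp (-s ^ 2 / 2 + s * wF) :=
        setIntegral_mono_on (J_integrableOn h) ((gauss_integrable wF).const_mul _)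
          measurableSet_Ioi (fun s hs => J_upper h hs)
    _ = (wF - wR) * Gint wF := integral_const_mul _ _

/- ### Statement -/

/-- If `b_IE·b_EI > b_EE·(V_F − V_R + b_II)`, then `F(N_E) → ∞` as `N_E → ∞`. -/
theorem F_tendsto_atTop (VR VF aE aI bEE bIE bEI bII νext : ℝ)
    (hV : VR < VF) (haE : 0 < aE) (haI : 0 < aI)
    (hEE : 0 ≤ bEE) (hIE : 0 < bIE) (hEI : 0 < bEI) (hII : 0 < bII) (hν : 0 ≤ νext)
    (hcond : bEE * (VF - VR + bII) < bIE * bEI)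
    (NIfun : ℝ → ℝ)
    (hNI : ∀ NE : ℝ, 0 ≤ NE →
      0 < NIfun NE ∧ NIfun NE * I2 VR VF aI bEE bEI bII νext NE (NIfun NE) = 1) :
    Filter.Tendsto (fun NE => NE * I1 VR VF aE bEE bIE NE (NIfun NE))
      Filter.atTop Filter.atTop := by
  have hsaI : 0 < Real.sqrt aI := Real.sqrt_pos.mpr haI
  have hsaE : 0 < Real.sqrt aE := Real.sqrt_pos.mpr haE
  have hΔI : 0 < (VF - VR) / Real.sqrt aI := div_pos (by linarith) hsaI
  have hΔE : 0 < (VF - VR) / Real.sqrt aE := div_pos (by linarith) hsaE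
  have hβpos : 0 < VF - VR + bII := by linarith
  -- Step A : upper bound on `V0_I`
  have keyA : ∀ NE : ℝ, 0 ≤ NE →
      bEI * NE - bII * NIfun NE + (bEI - bEE) * νext ≤ VF + NIfun NE * (VF - VR) := by
    intro NE hNE
    obtain ⟨hNIpos, hNIeq⟩ := hNI NE hNE
    by_contra hcon
    push_neg at hcon
    set NI := NIfun NE with hNIdef
    set V0 : ℝ := bEI * NE - bII * NI + (bEI - bEE) * νext with hV0
    set wF : ℝ := (VF - V0) / Real.sqrt aI with hwF
    set wR : ℝ := (VR - V0) / Real.sqrt aI with hwR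
    have hwRF : wR ≤ wF := by
      rw [hwF, hwR]
      gcongr
    have hwFneg : NI * ((VF - VR) / Real.sqrt aI) < -wF := by
      have h1 : NI * (VF - VR) < V0 - VF := by linarith
      calc NI * ((VF - VR) / Real.sqrt aI) = (NI * (VF - VR)) / Real.sqrt aI := by ring
        _ < (V0 - VF) / Real.sqrt aI := by gcongr
        _ = -wF := by rw [hwF]; ring
    have hwFlt0 : wF < 0 := by nlinarith [mul_pos hNIpos hΔI]
    have hy : 0 < -wF := by nlinarith [mul_pos hNIpos hΔI]
    have hI2eq : I2 VR VF aI bEE bEI bII νext NE NI =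
        ∫ s in Set.Ioi (0:ℝ),
          Real.exp (-s ^ 2 / 2) / s * (Real.exp (s * wF) - Real.exp (s * wR)) := by
      simp only [I2]
      rfl
    have hdiffI : wF - wR = (VF - VR) / Real.sqrt aI := by
      rw [hwF, hwR, div_sub_div_same]
      congr 1; ring
    have hle : I2 VR VF aI bEE bEI bII νext NE NI ≤
        ((VF - VR) / Real.sqrt aI) * Gint wF := by
      rw [hI2eq]
      have := J_le hwRF
      rwa [hdiffI] at this
    have hG : Gint wF ≤ 1 / (-wF) := Gint_le hwFlt0
    have s1 : NI * I2 VR VF aI bEE bEI bII νext NE NI ≤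
        NI * (((VF - VR) / Real.sqrt aI) * Gint wF) :=
      mul_le_mul_of_nonneg_left hle hNIpos.le
    have s2 : NI * (((VF - VR) / Real.sqrt aI) * Gint wF) ≤
        NI * ((VF - VR) / Real.sqrt aI) * (1 / (-wF)) := by
      rw [← mul_assoc]
      exact mul_le_mul_of_nonneg_left hG (mul_pos hNIpos hΔI).le
    have s3 : NI * ((VF - VR) / Real.sqrt aI) * (1 / (-wF)) < 1 := by
      rw [mul_one_div, div_lt_one hy]
      exact hwFneg
    linarith [hNIeq, s1, s2, s3]
  -- Step B : conclusion
  have hεpos : 0 < bIE * bEI - bEE * (VF - VR + bII) := by linarith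
  have hc : 0 < (VF - VR) / Real.sqrt aE * Real.exp (-2⁻¹) :=
    mul_pos hΔE (Real.exp_pos _)
  refine Filter.tendsto_atTop_mono' Filter.atTop ?_
    (Filter.Tendsto.const_mul_atTop hc Filter.tendsto_id)
  filter_upwards [Filter.eventually_ge_atTop
    (max 0 ((bIE * (VF + bEE * νext) - VR * (VF - VR + bII)) /
      (bIE * bEI - bEE * (VF - VR + bII))))] with NE hNE
  have hNE0 : 0 ≤ NE := le_trans (le_max_left _ _) hNE
  obtain ⟨hNIpos, hNIeq⟩ := hNI NE hNE0
  have hA := keyA NE hNE0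
  set NI := NIfun NE with hNIdef
  have hstep1 : bEI * NE - (VF + bEE * νext) ≤ NI * (VF - VR + bII) := by
    nlinarith [mul_nonneg hEI.le hν]
  have hstep2 : bIE * (VF + bEE * νext) - VR * (VF - VR + bII) ≤
      NE * (bIE * bEI - bEE * (VF - VR + bII)) := by
    have h' : (bIE * (VF + bEE * νext) - VR * (VF - VR + bII)) /
        (bIE * bEI - bEE * (VF - VR + bII)) ≤ NE := le_trans (le_max_right _ _) hNE
    calc bIE * (VF + bEE * νext) - VR * (VF - VR + bII)
        = ((bIE * (VF + bEE * νext) - VR * (VF - VR + bII)) /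
            (bIE * bEI - bEE * (VF - VR + bII))) * (bIE * bEI - bEE * (VF - VR + bII)) :=
          (div_mul_cancel₀ _ hεpos.ne').symm
      _ ≤ NE * (bIE * bEI - bEE * (VF - VR + bII)) :=
          mul_le_mul_of_nonneg_right h' hεpos.le
  have hmul : bIE * (bEI * NE - (VF + bEE * νext)) ≤ bIE * (NI * (VF - VR + bII)) :=
    mul_le_mul_of_nonneg_left hstep1 hIE.le
  have hV0E : bEE * NE - bIE * NI ≤ VR := by
    have h3 : (bEE * NE - bIE * NI) * (VF - VR + bII) ≤ VR * (VF - VR + bII) := by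
      nlinarith [hmul, hstep2]
    exact le_of_mul_le_mul_right h3 hβpos
  set wFE : ℝ := (VF - (bEE * NE - bIE * NI)) / Real.sqrt aE with hwFE
  set wRE : ℝ := (VR - (bEE * NE - bIE * NI)) / Real.sqrt aE with hwRE
  have hwRFE : wRE ≤ wFE := by
    rw [hwFE, hwRE]
    gcongr
  have hwRnn : 0 ≤ wRE := by
    rw [hwRE]
    exact div_nonneg (by linarith) hsaE.le
  have hdiffE : wFE - wRE = (VF - VR) / Real.sqrt aE := by
    rw [hwFE, hwRE, div_sub_div_same]
    congr 1; ring
  have hI1eq : I1 VR VF aE bEE bIE NE NI =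
      ∫ s in Set.Ioi (0:ℝ),
        Real.exp (-s ^ 2 / 2) / s * (Real.exp (s * wFE) - Real.exp (s * wRE)) := by
    simp only [I1]
    rfl
  have hJ : ((VF - VR) / Real.sqrt aE) * Gint wRE ≤ I1 VR VF aE bEE bIE NE NI := by
    rw [hI1eq]
    have := J_ge hwRFE
    rwa [hdiffE] at this
  have hI1ge : (VF - VR) / Real.sqrt aE * Real.exp (-2⁻¹) ≤ I1 VR VF aE bEE bIE NE NI :=
    le_trans (mul_le_mul_of_nonneg_left (Gint_ge hwRnn) hΔE.le) hJ
  calc (VF - VR) / Real.sqrt aE * Real.exp (-2⁻¹) * id NE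
      = NE * ((VF - VR) / Real.sqrt aE * Real.exp (-2⁻¹)) := by simp [mul_comm]
    _ ≤ NE * I1 VR VF aE bEE bIE NE NI := mul_le_mul_of_nonneg_left hI1ge hNE0
end
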